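/- There exist constants C₀ > 0 and t₀ ≥ 1 such that for all a, b, c > 0 with t := ac/b² ≥ t₀ one has σ ≤ C₀ a t^{−1/2} and a/4 ≤ μ₁ ≤ C₀ a. In particular, for every K > 0 there exists t₁ ≥ 1 such that ac/b² ≥ t₁ implies μ₁ ≥ K σ. -/

import Mathlib

open Matrix

noncomputable section

abbrev M3 : Type := Matrix (Fin 3) (Fin 3) ℝ

def sstar (a b c : ℝ) : ℝ := (b + Real.sqrt (b ^ 2 + 24 * a * c)) / (4 * c)

def phiF (a b c X : ℝ) : ℝ :=
  (a/2 + (sstar a b c) ^ 2 * c / 3)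
    + (sstar a b c * b / 9 - 2 * (sstar a b c) ^ 2 * c / 3) * X
    + ((sstar a b c) ^ 2 * c / 6) * X ^ 2

def mu1 (a b c : ℝ) : ℝ := sInf (phiF a b c '' Set.Icc 0 1)

def sigmaP (a b c : ℝ) : ℝ := sstar a b c * b / 18

/-!
Everything is governed by `p = b s_*`. Since `s_*` is the positive root of `2 c s² = b s + 3 a`,
the quadratic `φ` becomes `φ(X) = a/4 + a (1 - X)(3 - X)/4 + p (3X² - 8X + 6)/36`, so
`a/4 ≤ μ₁ ≤ φ(1) = a/4 + p/36`. Multiplying the root equation by `a` gives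
`2 t p² = a p + 3 a²` with `t = ac/b²`; for `t ≥ 1` this forces `p √t ≤ 3a/2`, which bounds
`σ = p/18` by `a / (12 √t)` and `p` itself by `3a/2`.
-/

section

variable {a b c : ℝ}

lemma sstar_pos (ha : 0 < a) (hb : 0 < b) (hc : 0 < c) : 0 < sstar a b c := by
  unfold sstar
  positivity

lemma two_mul_mul_sstar_sq (hc : c ≠ 0) (hdisc : 0 ≤ b ^ 2 + 24 * a * c) :
    2 * c * sstar a b c ^ 2 = b * sstar a b c + 3 * a := by
  have hsqrt := Real.sq_sqrt hdisc
  unfold sstar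
  set r := √(b ^ 2 + 24 * a * c)
  field_simp
  linear_combination 2 * hsqrt

lemma phiF_eq (hc : c ≠ 0) (hdisc : 0 ≤ b ^ 2 + 24 * a * c) (X : ℝ) :
    phiF a b c X = a / 4 + a * (1 - X) * (3 - X) / 4
      + b * sstar a b c * (3 * X ^ 2 - 8 * X + 6) / 36 := by
  unfold phiF
  linear_combination (1 / 6 - 1 / 3 * X + 1 / 12 * X ^ 2) * two_mul_mul_sstar_sq hc hdisc

lemma quarter_le_phiF (ha : 0 < a) (hb : 0 < b) (hc : 0 < c) {X : ℝ} (hX : X ≤ 1) :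
    a / 4 ≤ phiF a b c X := by
  rw [phiF_eq hc.ne' (by positivity)]
  have hp : 0 < b * sstar a b c := mul_pos hb (sstar_pos ha hb hc)
  have h₁ : 0 ≤ a * (1 - X) * (3 - X) := by
    have : 0 ≤ 1 - X := by linarith
    have : 0 ≤ 3 - X := by linarith
    positivity
  have h₂ : 0 < 3 * X ^ 2 - 8 * X + 6 := by nlinarith [sq_nonneg (3 * X - 4)]
  have := mul_pos hp h₂
  linarith

lemma quarter_le_mu1 (ha : 0 < a) (hb : 0 < b) (hc : 0 < c) : a / 4 ≤ mu1 a b c := by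
  refine le_csInf ⟨phiF a b c 0, 0, by norm_num, rfl⟩ ?_
  rintro _ ⟨X, ⟨-, hX⟩, rfl⟩
  exact quarter_le_phiF ha hb hc hX

lemma mu1_le (ha : 0 < a) (hb : 0 < b) (hc : 0 < c) :
    mu1 a b c ≤ a / 4 + b * sstar a b c / 36 := by
  have hbdd : BddBelow (phiF a b c '' Set.Icc 0 1) := by
    refine ⟨a / 4, ?_⟩
    rintro _ ⟨X, ⟨-, hX⟩, rfl⟩
    exact quarter_le_phiF ha hb hc hX
  calc mu1 a b c ≤ phiF a b c 1 := csInf_le hbdd ⟨1, by norm_num, rfl⟩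
    _ = a / 4 + b * sstar a b c / 36 := by
      rw [phiF_eq hc.ne' (by positivity)]
      ring

lemma mul_sstar_mul_sqrt_le (ha : 0 < a) (hb : 0 < b) (hc : 0 < c) (ht : 1 ≤ a * c / b ^ 2) :
    b * sstar a b c * √(a * c / b ^ 2) ≤ 3 * a / 2 := by
  have hroot : 2 * (b * sstar a b c * √(a * c / b ^ 2)) ^ 2
      = a * (b * sstar a b c) + 3 * a ^ 2 := by
    rw [mul_pow, Real.sq_sqrt (by positivity)]
    field_simp
    linear_combination two_mul_mul_sstar_sq (a := a) (b := b) hc.ne' (by positivity)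
  set p := b * sstar a b c
  set u := √(a * c / b ^ 2)
  have hp : 0 < p := mul_pos hb (sstar_pos ha hb hc)
  have hu : 1 ≤ u := Real.one_le_sqrt.mpr ht
  have hpu : p ≤ p * u := le_mul_of_one_le_right hp.le hu
  nlinarith [mul_pos hp (zero_lt_one.trans_le hu)]

lemma mul_sstar_le (ha : 0 < a) (hb : 0 < b) (hc : 0 < c) (ht : 1 ≤ a * c / b ^ 2) :
    b * sstar a b c ≤ 3 * a / 2 :=
  (le_mul_of_one_le_right (mul_pos hb (sstar_pos ha hb hc)).le
    (Real.one_le_sqrt.mpr ht)).trans (mul_sstar_mul_sqrt_le ha hb hc ht)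

lemma sigmaP_le (ha : 0 < a) (hb : 0 < b) (hc : 0 < c) (ht : 1 ≤ a * c / b ^ 2) :
    sigmaP a b c ≤ a * (a * c / b ^ 2) ^ (-(1 : ℝ) / 2) := by
  have ht₀ : 0 < a * c / b ^ 2 := by positivity
  rw [neg_div, Real.rpow_neg ht₀.le, ← Real.sqrt_eq_rpow, ← div_eq_mul_inv,
    le_div_iff₀ (Real.sqrt_pos.mpr ht₀), sigmaP, mul_comm (sstar a b c)]
  linarith [mul_sstar_mul_sqrt_le ha hb hc ht]

end

/-- There are C₀ > 0 and t₀ ≥ 1 such that whenever t = ac/b² ≥ t₀ one has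
σ ≤ C₀ a t^{−1/2} and a/4 ≤ μ₁ ≤ C₀ a; consequently, for every K > 0 there is
t₁ ≥ 1 such that ac/b² ≥ t₁ implies μ₁ ≥ K σ. -/
theorem stmt11 :
    (∃ C₀ : ℝ, 0 < C₀ ∧ ∃ t₀ : ℝ, 1 ≤ t₀ ∧
      ∀ a b c : ℝ, 0 < a → 0 < b → 0 < c → t₀ ≤ a * c / b ^ 2 →
        sigmaP a b c ≤ C₀ * a * (a * c / b ^ 2) ^ (-(1:ℝ)/2) ∧
        a / 4 ≤ mu1 a b c ∧ mu1 a b c ≤ C₀ * a) ∧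
    (∀ K : ℝ, 0 < K → ∃ t₁ : ℝ, 1 ≤ t₁ ∧
      ∀ a b c : ℝ, 0 < a → 0 < b → 0 < c → t₁ ≤ a * c / b ^ 2 →
        K * sigmaP a b c ≤ mu1 a b c) := by
  refine ⟨⟨1, one_pos, 1, le_rfl, fun a b c ha hb hc ht => ?_⟩,
    fun K hK => ⟨max 1 (K ^ 2), le_max_left _ _, fun a b c ha hb hc ht => ?_⟩⟩
  · refine ⟨by simpa using sigmaP_le ha hb hc ht, quarter_le_mu1 ha hb hc, ?_⟩
    linarith [mu1_le ha hb hc, mul_sstar_le ha hb hc ht]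
  · have ht₁ : 1 ≤ a * c / b ^ 2 := (le_max_left _ _).trans ht
    have hK_le : K ≤ √(a * c / b ^ 2) :=
      Real.le_sqrt_of_sq_le ((le_max_right _ _).trans ht)
    have hp : 0 ≤ b * sstar a b c := (mul_pos hb (sstar_pos ha hb hc)).le
    calc K * sigmaP a b c = K * (b * sstar a b c) / 18 := by rw [sigmaP]; ring
      _ ≤ √(a * c / b ^ 2) * (b * sstar a b c) / 18 := by gcongr
      _ ≤ a / 4 := by linarith [mul_sstar_mul_sqrt_le ha hb hc ht₁]
      _ ≤ mu1 a b c := quarter_le_mu1 ha hb hc
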